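/- Let A(t) = tr((g(t)⁻¹h(t))²) where g' = 2Hh and h' = S + 2H h g⁻¹ h − A·h (pointwise, ignoring Laplacian terms by taking S symmetric given), with H = tr(g⁻¹h). Then A'(t) = 2tr(g⁻¹S g⁻¹ h) − 2A², i.e. the reaction term of |A|² under the flow is −2|A|⁴. -/

import Mathlib

/-!
Write `P = g⁻¹h`. Since `(g⁻¹)' = -g⁻¹g'g⁻¹ = -2H g⁻¹hg⁻¹`, the product rule gives
`P' = -2H g⁻¹hg⁻¹h + g⁻¹(S + 2H hg⁻¹h - A h) = g⁻¹S - A P`: the `H`-terms cancel. Hence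
`A' = tr(P'P + PP') = 2 tr(P'P) = 2 tr(g⁻¹Sg⁻¹h) - 2A²`.
-/

namespace Matrix

variable {𝕜 n : Type*} [Fintype n]

section NontriviallyNormedField

variable [NontriviallyNormedField 𝕜] {M : 𝕜 → Matrix n n 𝕜} {M' : Matrix n n 𝕜} {t : 𝕜}

theorem hasDerivAt_of_hasDerivAt_apply (h : ∀ i j, HasDerivAt (fun s => M s i j) (M' i j) t) :
    HasDerivAt M M' t :=
  hasDerivAt_pi.2 fun i => hasDerivAt_pi.2 (h i)

theorem HasDerivAt.matrix_trace (hM : HasDerivAt M M' t) :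
    HasDerivAt (fun s => (M s).trace) M'.trace t := by
  have hdiag (i : n) : HasDerivAt (fun s => M s i i) (M' i i) t :=
    hasDerivAt_pi.1 (hasDerivAt_pi.1 hM i) i
  simpa only [trace, diag] using HasDerivAt.fun_sum fun i _ => hdiag i

end NontriviallyNormedField

-- Any normed-algebra structure will do: it induces the product topology, which is all that
-- `HasDerivAt` on matrices sees.
attribute [local instance] Matrix.linftyOpNormedRing Matrix.linftyOpNormedAlgebra

variable [DecidableEq n]

theorem HasDerivAt.matrix_mul [NontriviallyNormedField 𝕜] {M N : 𝕜 → Matrix n n 𝕜}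
    {M' N' : Matrix n n 𝕜} {t : 𝕜} (hM : HasDerivAt M M' t) (hN : HasDerivAt N N' t) :
    HasDerivAt (fun s => M s * N s) (M' * N t + M t * N') t :=
  hM.mul hN

theorem HasDerivAt.matrix_inv [RCLike 𝕜] {M : 𝕜 → Matrix n n 𝕜}
    {M' : Matrix n n 𝕜} {t : 𝕜} (hu : IsUnit (M t)) (hM : HasDerivAt M M' t) :
    HasDerivAt (fun s => (M s)⁻¹) (-((M t)⁻¹ * M' * (M t)⁻¹)) t := by
  obtain ⟨u, hu⟩ := hu
  have hinv := hasFDerivAt_ringInverse (𝕜 := 𝕜) u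
  rw [coe_units_inv, hu] at hinv
  have hcomp := hinv.comp_hasDerivAt t hM
  simp only [Function.comp_def, ← nonsing_inv_eq_ringInverse, _root_.neg_apply,
    ContinuousLinearMap.mulLeftRight_apply] at hcomp
  exact hcomp

end Matrix

open Matrix

theorem stmt11_general {n : ℕ} (g h S : ℝ → Matrix (Fin n) (Fin n) ℝ) (t₀ : ℝ)
    (hgpd : ∀ t, (g t).PosDef)
    (H A : ℝ → ℝ)
    (hA : ∀ t, A t = (((g t)⁻¹ * h t) * ((g t)⁻¹ * h t)).trace)
    (hgderiv : ∀ i j, HasDerivAt (fun t => g t i j) ((2 * H t₀) * h t₀ i j) t₀)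
    (hhderiv : ∀ i j, HasDerivAt (fun t => h t i j)
      ((S t₀ + (2 * H t₀) • (h t₀ * (g t₀)⁻¹ * h t₀) - A t₀ • h t₀) i j) t₀) :
    HasDerivAt A (2 * ((g t₀)⁻¹ * S t₀ * (g t₀)⁻¹ * h t₀).trace - 2 * (A t₀) ^ 2) t₀ := by
  have hg : HasDerivAt g ((2 * H t₀) • h t₀) t₀ :=
    hasDerivAt_of_hasDerivAt_apply fun i j => by simpa using hgderiv i j
  have hP : HasDerivAt (fun t => (g t)⁻¹ * h t)
      ((g t₀)⁻¹ * S t₀ - A t₀ • ((g t₀)⁻¹ * h t₀)) t₀ := by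
    convert (hg.matrix_inv (hgpd t₀).isUnit).matrix_mul (hasDerivAt_of_hasDerivAt_apply hhderiv)
      using 1
    simp only [Matrix.smul_mul, Matrix.mul_smul, Matrix.mul_add, Matrix.mul_sub, Matrix.neg_mul,
      Matrix.mul_assoc]
    abel
  refine ((hP.matrix_mul hP).matrix_trace.congr_deriv ?_).congr_of_eventuallyEq (.of_forall hA)
  rw [hA t₀, trace_add, Matrix.sub_mul, Matrix.mul_sub, trace_sub, trace_sub,
    trace_mul_comm ((g t₀)⁻¹ * h t₀) ((g t₀)⁻¹ * S t₀)]
  simp only [Matrix.smul_mul, Matrix.mul_smul, trace_smul, smul_eq_mul, Matrix.mul_assoc]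
  ring

/-- with `g' = 2Hh` and `h' = S + 2H h g⁻¹ h − |A|² h`, the quantity
`|A|² = tr((g⁻¹h)²)` evolves by `(|A|²)' = 2 tr(g⁻¹ S g⁻¹ h) − 2(|A|²)²`:
the reaction term of `|A|²` under the flow is `−2|A|⁴`. -/
theorem stmt11 {n : ℕ} (g h S : ℝ → Matrix (Fin n) (Fin n) ℝ) (t₀ : ℝ)
    (hgpd : ∀ t, (g t).PosDef)
    (H A : ℝ → ℝ)
    (hH : ∀ t, H t = ((g t)⁻¹ * h t).trace)
    (hA : ∀ t, A t = (((g t)⁻¹ * h t) * ((g t)⁻¹ * h t)).trace)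
    (hgderiv : ∀ i j, HasDerivAt (fun t => g t i j) ((2 * H t₀) * h t₀ i j) t₀)
    (hhderiv : ∀ i j, HasDerivAt (fun t => h t i j)
      ((S t₀ + (2 * H t₀) • (h t₀ * (g t₀)⁻¹ * h t₀) - A t₀ • h t₀) i j) t₀) :
    HasDerivAt A (2 * ((g t₀)⁻¹ * S t₀ * (g t₀)⁻¹ * h t₀).trace - 2 * (A t₀) ^ 2) t₀ :=
  stmt11_general g h S t₀ hgpd H A hA hgderiv hhderiv
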